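/- arXiv:2209.06922 — 4 statements merged into one kernel-verified Lean document; each statement's English description precedes it below -/
import Mathlib

section
/- Let A ∈ ℂ^{n×n}, let D = diag(σ₁, …, σ_s) ∈ ℂ^{s×s} be diagonal, and let T : ℂ^{n×s} → ℂ^{n×s} be the Sylvester operator T(F) = AF + FD. Then for every F ∈ ℂ^{n×s} and every j ≥ 1, the block Krylov subspace generated by T equals the one generated by A: K_j(T, F) = K_j(A, F), i.e., the span of all columns of F, T(F), T²(F), …, T^{j−1}(F) equals the span of all columns of F, AF, A²F, …, A^{j−1}F. -/
open Matrix

lemma sum_mulVec' {n : ℕ} {ι : Type*} (f : ι → Matrix (Fin n) (Fin n) ℂ)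
    (t : Finset ι) (v : Fin n → ℂ) :
    (∑ k ∈ t, f k).mulVec v = ∑ k ∈ t, (f k).mulVec v := by
  funext p
  simp only [Matrix.mulVec, dotProduct, Matrix.sum_apply, Finset.sum_apply,
    Finset.sum_mul]
  rw [Finset.sum_comm]

/-- Binomial-shift membership lemma. -/
lemma shift_pow_mem {n : ℕ} (B : Matrix (Fin n) (Fin n) ℂ) (t : ℂ)
    (v : Fin n → ℂ) (i : ℕ) (S : Submodule ℂ (Fin n → ℂ))
    (hS : ∀ k ≤ i, (B ^ k).mulVec v ∈ S) :
    ((B + t • 1) ^ i).mulVec v ∈ S := by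
  have hcomm : Commute B (t • (1 : Matrix (Fin n) (Fin n) ℂ)) :=
    (Commute.one_right B).smul_right t
  rw [hcomm.add_pow]
  have : (∑ k ∈ Finset.range (i + 1),
      B ^ k * (t • (1 : Matrix (Fin n) (Fin n) ℂ)) ^ (i - k) * (i.choose k : Matrix (Fin n) (Fin n) ℂ)).mulVec v
      = ∑ k ∈ Finset.range (i + 1),
        ((t ^ (i - k) * (i.choose k : ℂ)) • ((B ^ k).mulVec v)) := by
    rw [sum_mulVec']
    refine Finset.sum_congr rfl fun k _ => ?_
    have h1 : B ^ k * (t • (1 : Matrix (Fin n) (Fin n) ℂ)) ^ (i - k) * (i.choose k : Matrix (Fin n) (Fin n) ℂ)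
        = (t ^ (i - k) * (i.choose k : ℂ)) • B ^ k := by
      rw [smul_pow, one_pow]
      rw [show ((i.choose k : Matrix (Fin n) (Fin n) ℂ)) = (i.choose k : ℂ) • 1 by
        simp [Nat.cast_smul_eq_nsmul]]
      simp [Matrix.mul_smul, Matrix.smul_mul, smul_smul, mul_comm]
    rw [h1, Matrix.smul_mulVec]
  rw [this]
  exact Submodule.sum_mem S fun k hk =>
    Submodule.smul_mem S _ (hS k (Nat.lt_succ_iff.mp (Finset.mem_range.mp hk)))

/-- For the Sylvester operator `T(F) = A F + F D` with `D` diagonal,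
the block Krylov subspace generated by `T` from `F` coincides with the one generated by `A`:
`K_j(T, F) = K_j(A, F)` for every `j ≥ 1`. -/
theorem sylvester_block_krylov_invariance {n s : ℕ}
    (A : Matrix (Fin n) (Fin n) ℂ) (σv : Fin s → ℂ) (F : Matrix (Fin n) (Fin s) ℂ)
    (j : ℕ) (hj : 1 ≤ j) :
    Submodule.span ℂ
      {x : Fin n → ℂ | ∃ i < j, ∃ c : Fin s,
        x = fun p => ((fun G : Matrix (Fin n) (Fin s) ℂ =>
          A * G + G * Matrix.diagonal σv)^[i] F) p c} =
    Submodule.span ℂ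
      {x : Fin n → ℂ | ∃ i < j, ∃ c : Fin s, x = fun p => ((A ^ i) * F) p c} := by
  set T := fun G : Matrix (Fin n) (Fin s) ℂ => A * G + G * Matrix.diagonal σv with hT
  have hcol : ∀ (i : ℕ) (c : Fin s), (fun p => (T^[i] F) p c)
      = ((A + σv c • 1) ^ i).mulVec (fun q => F q c) := by
    intro i c
    induction i with
    | zero => simp [Matrix.one_mulVec]
    | succ i ih =>
      rw [Function.iterate_succ_apply', pow_succ', ← Matrix.mulVec_mulVec, ← ih]
      funext p
      simp only [hT, Matrix.add_apply, Matrix.mul_diagonal, Matrix.add_mulVec,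
        Matrix.smul_mulVec, Matrix.one_mulVec, Pi.add_apply, Pi.smul_apply,
        smul_eq_mul]
      rw [mul_comm _ (σv c)]
      congr 1
  have hAcol : ∀ (i : ℕ) (c : Fin s), (fun p => ((A ^ i) * F) p c)
      = (A ^ i).mulVec (fun q => F q c) := by
    intro i c
    funext p
    simp [Matrix.mulVec, dotProduct, Matrix.mul_apply]
  apply le_antisymm <;> rw [Submodule.span_le] <;> rintro x ⟨i, hi, c, rfl⟩
  · show (fun p => (T^[i] F) p c) ∈ _
    rw [hcol]
    exact shift_pow_mem A (σv c) _ i _ fun k hk =>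
      Submodule.subset_span ⟨k, lt_of_le_of_lt hk hi, c, (hAcol k c).symm ▸ rfl⟩
  · show (fun p => ((A ^ i) * F) p c) ∈ _
    rw [hAcol]
    have hA : A = (A + σv c • 1) + (-σv c) • 1 := by
      simp [add_assoc, ← add_smul]
    rw [hA]
    exact shift_pow_mem (A + σv c • 1) (-σv c) _ i _ fun k hk =>
      Submodule.subset_span ⟨k, lt_of_le_of_lt hk hi, c, by rw [hcol]⟩
end

section
/- (Shift-dependent harmonic Ritz problem.) Let A ∈ ℂ^{n×n}, σ ∈ ℂ with A + σI invertible, U ∈ ℂ^{n×k}, C = AU, and suppose W_{j+1} ∈ ℂ^{n×(j+1)s} and H̄_j ∈ ℂ^{(j+1)s×js} satisfy the block Arnoldi relation A W_j = W_{j+1} H̄_j, where W_j is the first js columns of W_{j+1}. Set V̂ = [U W_j] ∈ ℂ^{n×(k+js)}, Ŵ = [C W_{j+1}] ∈ ℂ^{n×(k+(j+1)s)}, G = the block diagonal matrix with diagonal blocks I_k and σĪ + H̄_j, and M = [σU 0] ∈ ℂ^{n×(k+js)}. Then for g ∈ ℂ^{k+js}, μ ∈ ℂ and y = (A + σI) V̂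 g, the harmonic Ritz condition that (A + σI)⁻¹ y − μ y is orthogonal to every column of (A + σI) V̂ holds if and only if g satisfies the generalized eigenproblem (Ŵ G + M)* V̂ g = μ (Ŵ G + M)* (Ŵ G + M) g. -/
/-!
With `S = A + σI`, the shifted block Arnoldi relation gives `ŴG + M = S V̂`. Then
`S⁻¹ y = V̂ g`, and the orthogonality of `S⁻¹ y − μ y` to the columns of `S V̂` reads
`(S V̂)* V̂ g − μ (S V̂)* (S V̂) g = 0`.
-/

open Matrix

/-- The `a × b` "padded identity": ones on the diagonal `p = q`, zeros elsewhere. -/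
def padId (a b : ℕ) : Matrix (Fin a) (Fin b) ℂ :=
  fun p q => if (p : ℕ) = (q : ℕ) then 1 else 0

theorem mul_padId {m a b : ℕ} (h : b ≤ a) (W : Matrix (Fin m) (Fin a) ℂ) :
    W * padId a b = W.submatrix id (Fin.castLE h) := by
  ext p q
  rw [mul_apply, Finset.sum_eq_single (Fin.castLE h q)]
  · simp [padId]
  · intro r _ hr
    have hrq : (r : ℕ) ≠ q := fun hrq => hr (Fin.ext hrq)
    simp [padId, hrq]
  · simp

theorem fromCols_mul_fromBlocks_add_fromCols_eq {R m k a b : Type*} [CommRing R]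
    [Fintype m] [DecidableEq m] [Fintype k] [DecidableEq k] [Fintype a]
    (A : Matrix m m R) (σ : R) (U : Matrix m k R) (W₁ : Matrix m a R) (W : Matrix m b R)
    (P H : Matrix a b R) (hP : W₁ * P = W) (hA : A * W = W₁ * H) :
    fromCols (A * U) W₁ * fromBlocks (1 : Matrix k k R) 0 0 (σ • P + H) + fromCols (σ • U) 0
      = (A + σ • 1) * fromCols U W := by
  rw [fromCols_mul_fromBlocks, mul_fromCols]
  simp only [Matrix.mul_one, Matrix.mul_zero, add_zero, zero_add, Matrix.mul_add,
    Matrix.mul_smul, hP, ← hA, Matrix.add_mul, Matrix.smul_mul, Matrix.one_mul]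
  ext i (j | j) <;> simp [add_comm]

theorem forall_sum_star_mul_eq_zero_iff {R m n : Type*} [Fintype m]
    [NonUnitalNonAssocSemiring R] [StarRing R] (Z : Matrix m n R) (v : m → R) :
    (∀ c, ∑ p, star (Z p c) * v p = 0) ↔ Zᴴ *ᵥ v = 0 := by
  simp only [funext_iff, mulVec, dotProduct, conjTranspose_apply, Pi.zero_apply]

theorem harmonicRitz_orthogonal_iff {R m n : Type*} [CommRing R] [StarRing R]
    [Fintype m] [DecidableEq m] [Fintype n] {S : Matrix m m R} (hS : IsUnit S)
    (V : Matrix m n R) (g : n → R) (μ : R) :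
    (∀ c, ∑ p, star ((S * V) p c) * ((S⁻¹ *ᵥ ((S * V) *ᵥ g) - μ • ((S * V) *ᵥ g)) p) = 0) ↔
      ((S * V)ᴴ * V) *ᵥ g = μ • (((S * V)ᴴ * (S * V)) *ᵥ g) := by
  have hSV : S⁻¹ *ᵥ ((S * V) *ᵥ g) = V *ᵥ g := by
    rw [mulVec_mulVec, nonsing_inv_mul_cancel_left _ _ ((isUnit_iff_isUnit_det S).mp hS)]
  rw [forall_sum_star_mul_eq_zero_iff, hSV, mulVec_sub, mulVec_smul, sub_eq_zero,
    mulVec_mulVec, mulVec_mulVec]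

/-- (Shift-dependent harmonic Ritz problem.)  With `C = AU`, a block
Arnoldi relation `A W_j = W_{j+1} H̄_j`, `V̂ = [U W_j]`, `Ŵ = [C W_{j+1}]`,
`G = blkdiag(I_k, σĪ + H̄_j)`, `M = [σU 0]` and `y = (A + σI) V̂ g`, the harmonic Ritz
condition `(A + σI)⁻¹ y − μ y ⟂ (A + σI)V̂ eₗ` for every column `eₗ` holds iff
`(ŴG + M)* V̂ g = μ (ŴG + M)*(ŴG + M) g`. -/
theorem shift_dependent_harmonic_ritz {n s j k : ℕ}
    (A : Matrix (Fin n) (Fin n) ℂ) (σ : ℂ)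
    (hinv : IsUnit (A + σ • (1 : Matrix (Fin n) (Fin n) ℂ)))
    (U C : Matrix (Fin n) (Fin k) ℂ) (hC : C = A * U)
    (W1 : Matrix (Fin n) (Fin ((j + 1) * s)) ℂ)
    (H : Matrix (Fin ((j + 1) * s)) (Fin (j * s)) ℂ)
    (hA : A * (W1.submatrix id (Fin.castLE (Nat.mul_le_mul (Nat.le_succ j) le_rfl)))
            = W1 * H)
    (Vhat : Matrix (Fin n) (Fin k ⊕ Fin (j * s)) ℂ)
    (hV : Vhat = Matrix.fromCols U
        (W1.submatrix id (Fin.castLE (Nat.mul_le_mul (Nat.le_succ j) le_rfl))))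
    (What : Matrix (Fin n) (Fin k ⊕ Fin ((j + 1) * s)) ℂ)
    (hW : What = Matrix.fromCols C W1)
    (G : Matrix (Fin k ⊕ Fin ((j + 1) * s)) (Fin k ⊕ Fin (j * s)) ℂ)
    (hG : G = Matrix.fromBlocks (1 : Matrix (Fin k) (Fin k) ℂ) 0 0
        (σ • padId ((j + 1) * s) (j * s) + H))
    (M : Matrix (Fin n) (Fin k ⊕ Fin (j * s)) ℂ)
    (hM : M = Matrix.fromCols (σ • U) (0 : Matrix (Fin n) (Fin (j * s)) ℂ))
    (g : Fin k ⊕ Fin (j * s) → ℂ) (μ : ℂ) (y : Fin n → ℂ)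
    (hy : y = ((A + σ • (1 : Matrix (Fin n) (Fin n) ℂ)) * Vhat).mulVec g) :
    (∀ c : Fin k ⊕ Fin (j * s),
        ∑ p, star (((A + σ • (1 : Matrix (Fin n) (Fin n) ℂ)) * Vhat) p c) *
          (((A + σ • (1 : Matrix (Fin n) (Fin n) ℂ))⁻¹.mulVec y - μ • y) p) = 0) ↔
    ((What * G + M)ᴴ * Vhat).mulVec g
      = μ • ((What * G + M)ᴴ * (What * G + M)).mulVec g := by
  subst hC hV hW hG hM hy
  rw [fromCols_mul_fromBlocks_add_fromCols_eq A σ U W1 _ _ H (mul_padId _ W1) hA]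
  exact harmonicRitz_orthogonal_iff hinv _ g μ
end

section
/- (Reduced small problem of unprojected rsbFOM.) Let A ∈ ℂ^{n×n}, σ ∈ ℂ, U ∈ ℂ^{n×k}, C = AU, and suppose W_{j+1} ∈ ℂ^{n×(j+1)s} has orthonormal columns (W_{j+1}* W_{j+1} = I) and satisfies the block Arnoldi relation A W_j = W_{j+1} H̄_j, where W_j is the first js columns of W_{j+1} and H_j is H̄_j with its last s rows deleted. Suppose U*C + σ U*U is invertible and set Φ = (C + σU)(U*C + σ U*U)⁻¹ U*. Then (i) W_j*(I − Φ)(A + σI) W_j = (H_j + σI) − (W_j* C + σ W_j* U)(U*C + σ U*U)⁻¹ U* W_{j+1}(H̄_j + σĪ); and (ii) for any r₀ ∈ ℂⁿ with W_j* r₀ = E_j d, W_j*(I − Φ) r₀ = E_j d − (W_j* C + σ W_j* U)(U*C + σ U*U)⁻¹ U* r₀. Hence the FOM equation W_j*(I − Φ)(A + σI) W_j y = W_j*(I − Φ) r₀ coincides with the small linear system ((H_j + σI) − (W_j*C + σW_j*U)(U*C + σU*U)⁻¹ U* W_{j+1}(H̄_j + σĪ)) y = E_j d − (W_j*C + σW_j*U)(U*C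 + σU*U)⁻¹ U* r₀. -/
open Matrix

lemma mul_padId_eq {a b m : ℕ} (h : b ≤ a) (M : Matrix (Fin m) (Fin a) ℂ) :
    M * padId a b = M.submatrix id (Fin.castLE h) := by
  ext p q
  rw [Matrix.mul_apply]
  rw [Finset.sum_eq_single (Fin.castLE h q)]
  · simp [padId]
  · intro r _ hr
    have : (r : ℕ) ≠ (q : ℕ) := fun hrq => hr (by ext; simpa using hrq)
    simp [padId, this]
  · simp

lemma padId_mul_eq {a b m : ℕ} (h : b ≤ a) (M : Matrix (Fin a) (Fin m) ℂ) :
    padId b a * M = M.submatrix (Fin.castLE h) id := by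
  ext p q
  rw [Matrix.mul_apply]
  rw [Finset.sum_eq_single (Fin.castLE h p)]
  · simp [padId]
  · intro r _ hr
    have : (p : ℕ) ≠ (r : ℕ) := fun hrq => hr (by ext; simpa using hrq.symm)
    simp [padId, this]
  · simp

lemma padId_conjTranspose (a b : ℕ) : (padId a b)ᴴ = padId b a := by
  ext p q
  simp [padId, conjTranspose_apply, eq_comm]

lemma padId_mul_padId {a b : ℕ} (h : b ≤ a) :
    padId b a * padId a b = (1 : Matrix (Fin b) (Fin b) ℂ) := by
  rw [padId_mul_eq h]
  ext p q
  simp [padId, Matrix.one_apply, Fin.ext_iff]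

/-- (Reduced small problem of unprojected rsbFOM.)  With `C = AU`,
orthonormal `W_{j+1}`, a block Arnoldi relation, `U*C + σU*U` invertible and
`Φ = (C + σU)(U*C + σU*U)⁻¹U*`:
(i) `W_j*(I − Φ)(A + σI)W_j = (H_j + σI) − (W_j*C + σW_j*U)(U*C + σU*U)⁻¹U*W_{j+1}(H̄_j + σĪ)`;
(ii) if `W_j* r₀ = E_j d` then
`W_j*(I − Φ)r₀ = E_j d − (W_j*C + σW_j*U)(U*C + σU*U)⁻¹U* r₀`;
hence the FOM equation `W_j*(I − Φ)(A + σI)W_j y = W_j*(I − Φ) r₀` coincides with the small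
linear system built from the right-hand sides of (i) and (ii). -/
theorem unprojected_rsbfom_small_problem {n s j k : ℕ}
    (A : Matrix (Fin n) (Fin n) ℂ) (σ : ℂ)
    (U C : Matrix (Fin n) (Fin k) ℂ) (hC : C = A * U)
    (W1 : Matrix (Fin n) (Fin ((j + 1) * s)) ℂ)
    (H : Matrix (Fin ((j + 1) * s)) (Fin (j * s)) ℂ)
    (horth : W1ᴴ * W1 = 1)
    (Wj : Matrix (Fin n) (Fin (j * s)) ℂ)
    (hWj : Wj = W1.submatrix id (Fin.castLE (Nat.mul_le_mul (Nat.le_succ j) le_rfl)))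
    (hA : A * Wj = W1 * H)
    (Hj : Matrix (Fin (j * s)) (Fin (j * s)) ℂ)
    (hHj : Hj = H.submatrix (Fin.castLE (Nat.mul_le_mul (Nat.le_succ j) le_rfl)) id)
    (N : Matrix (Fin k) (Fin k) ℂ) (hN : N = Uᴴ * C + σ • (Uᴴ * U)) (hNinv : IsUnit N)
    (Φ : Matrix (Fin n) (Fin n) ℂ) (hΦ : Φ = (C + σ • U) * N⁻¹ * Uᴴ)
    (r₀ : Fin n → ℂ) (d : Fin s → ℂ) (hr₀ : Wjᴴ.mulVec r₀ = (padId (j * s) s).mulVec d) :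
    (Wjᴴ * (((1 : Matrix (Fin n) (Fin n) ℂ) - Φ) *
        (A + σ • (1 : Matrix (Fin n) (Fin n) ℂ))) * Wj
      = (Hj + σ • (1 : Matrix (Fin (j * s)) (Fin (j * s)) ℂ)) -
          (Wjᴴ * C + σ • (Wjᴴ * U)) * N⁻¹ * Uᴴ * W1 *
            (H + σ • padId ((j + 1) * s) (j * s))) ∧
    (Wjᴴ.mulVec ((((1 : Matrix (Fin n) (Fin n) ℂ) - Φ)).mulVec r₀)
      = (padId (j * s) s).mulVec d -
          ((Wjᴴ * C + σ • (Wjᴴ * U)) * N⁻¹ * Uᴴ).mulVec r₀) ∧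
    (∀ y : Fin (j * s) → ℂ,
      (Wjᴴ * (((1 : Matrix (Fin n) (Fin n) ℂ) - Φ) *
          (A + σ • (1 : Matrix (Fin n) (Fin n) ℂ))) * Wj).mulVec y
        = Wjᴴ.mulVec ((((1 : Matrix (Fin n) (Fin n) ℂ) - Φ)).mulVec r₀) ↔
      ((Hj + σ • (1 : Matrix (Fin (j * s)) (Fin (j * s)) ℂ)) -
          (Wjᴴ * C + σ • (Wjᴴ * U)) * N⁻¹ * Uᴴ * W1 *
            (H + σ • padId ((j + 1) * s) (j * s))).mulVec y
        = (padId (j * s) s).mulVec d -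
            ((Wjᴴ * C + σ • (Wjᴴ * U)) * N⁻¹ * Uᴴ).mulVec r₀) := by
  have hle : j * s ≤ (j + 1) * s := Nat.mul_le_mul (Nat.le_succ j) le_rfl
  have hWj' : Wj = W1 * padId ((j + 1) * s) (j * s) := by
    rw [hWj, mul_padId_eq hle]
  have hWjH : Wjᴴ = padId (j * s) ((j + 1) * s) * W1ᴴ := by
    rw [hWj', conjTranspose_mul, padId_conjTranspose]
  have hP1 : Wjᴴ * W1 = padId (j * s) ((j + 1) * s) := by
    rw [hWjH, Matrix.mul_assoc, horth, Matrix.mul_one]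
  have key : (A + σ • (1 : Matrix (Fin n) (Fin n) ℂ)) * Wj
      = W1 * (H + σ • padId ((j + 1) * s) (j * s)) := by
    rw [Matrix.add_mul, hA, Matrix.smul_mul, Matrix.one_mul, Matrix.mul_add,
      Matrix.mul_smul, hWj']
  have e1 : Wjᴴ * (W1 * (H + σ • padId ((j + 1) * s) (j * s)))
      = Hj + σ • (1 : Matrix (Fin (j * s)) (Fin (j * s)) ℂ) := by
    rw [← Matrix.mul_assoc, hP1, Matrix.mul_add, Matrix.mul_smul,
      padId_mul_padId hle, padId_mul_eq hle, hHj]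
  have e2 : Wjᴴ * (C + σ • U) = Wjᴴ * C + σ • (Wjᴴ * U) := by
    rw [Matrix.mul_add, Matrix.mul_smul]
  have h1 : Wjᴴ * (((1 : Matrix (Fin n) (Fin n) ℂ) - Φ) *
        (A + σ • (1 : Matrix (Fin n) (Fin n) ℂ))) * Wj
      = (Hj + σ • (1 : Matrix (Fin (j * s)) (Fin (j * s)) ℂ)) -
          (Wjᴴ * C + σ • (Wjᴴ * U)) * N⁻¹ * Uᴴ * W1 *
            (H + σ • padId ((j + 1) * s) (j * s)) := by
    rw [hΦ, Matrix.sub_mul, Matrix.one_mul, Matrix.mul_sub, Matrix.sub_mul]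
    simp only [Matrix.mul_assoc]
    rw [key, e1, ← Matrix.mul_assoc Wjᴴ (C + σ • U), e2]
  have h2 : Wjᴴ.mulVec ((((1 : Matrix (Fin n) (Fin n) ℂ) - Φ)).mulVec r₀)
      = (padId (j * s) s).mulVec d -
          ((Wjᴴ * C + σ • (Wjᴴ * U)) * N⁻¹ * Uᴴ).mulVec r₀ := by
    rw [Matrix.mulVec_mulVec, Matrix.mul_sub, Matrix.mul_one, Matrix.sub_mulVec,
      hr₀, hΦ]
    simp only [← Matrix.mul_assoc]
    rw [e2]
  exact ⟨h1, h2, fun y => by rw [h1, h2]⟩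
end

section
/- Let A ∈ ℂ^{n×n}, let D = diag(σ₁, …, σ_s) ∈ ℂ^{s×s} be diagonal, let C ∈ ℂ^{n×k} satisfy C*C = I_k, and set P = I − C C*. Let R̂ ∈ ℂ^{n×s} satisfy C* R̂ = 0. Define the projected Sylvester operator S : ℂ^{n×s} → ℂ^{n×s} by S(F) = P(AF + FD). Then for every j ≥ 1, the block Krylov subspace generated by S from R̂ equals the block Krylov subspace generated by the matrix PA from R̂: the span of all columns of R̂, S(R̂), S²(R̂), …, S^{j−1}(R̂) equals the span of all columns of R̂, (PA)R̂, (PA)²R̂, …, (PA)^{j−1}R̂. -/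
open Matrix

open Finset in
lemma sylv_iter_eq {n s k : ℕ}
    (A : Matrix (Fin n) (Fin n) ℂ) (σv : Fin s → ℂ)
    (C : Matrix (Fin n) (Fin k) ℂ) (hC : Cᴴ * C = 1)
    (Rh : Matrix (Fin n) (Fin s) ℂ) (hR : Cᴴ * Rh = 0) (i : ℕ) :
    (fun F : Matrix (Fin n) (Fin s) ℂ =>
      ((1 : Matrix (Fin n) (Fin n) ℂ) - C * Cᴴ) * (A * F + F * Matrix.diagonal σv))^[i] Rh
    = ∑ m ∈ Finset.range (i+1), (i.choose m) •
        (((((1 : Matrix (Fin n) (Fin n) ℂ) - C * Cᴴ) * A) ^ m) * Rh * (Matrix.diagonal σv)^(i-m)) := by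
  set P : Matrix (Fin n) (Fin n) ℂ := 1 - C * Cᴴ with hPdef
  set T : Matrix (Fin n) (Fin n) ℂ := P * A with hTdef
  set D : Matrix (Fin s) (Fin s) ℂ := Matrix.diagonal σv with hDdef
  have h1 : (C * Cᴴ) * (C * Cᴴ) = C * Cᴴ := by
    rw [Matrix.mul_assoc, ← Matrix.mul_assoc Cᴴ, hC, Matrix.one_mul]
  have hPP : P * P = P := by
    rw [hPdef, sub_mul, one_mul, mul_sub, mul_one, h1]
    abel
  have hPRh : P * Rh = Rh := by
    rw [hPdef, Matrix.sub_mul, Matrix.one_mul, Matrix.mul_assoc, hR, Matrix.mul_zero, sub_zero]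
  have hPT : P * T = T := by
    rw [hTdef, ← Matrix.mul_assoc, hPP]
  let f : Module.End ℂ (Matrix (Fin n) (Fin s) ℂ) :=
    { toFun := fun F => T * F
      map_add' := fun F G => Matrix.mul_add T F G
      map_smul' := fun c F => Matrix.mul_smul T c F }
  let g : Module.End ℂ (Matrix (Fin n) (Fin s) ℂ) :=
    { toFun := fun F => F * D
      map_add' := fun F G => Matrix.add_mul F G D
      map_smul' := fun c F => Matrix.smul_mul c F D }
  have hfg : Commute f g := by
    refine LinearMap.ext fun F => ?_
    exact (Matrix.mul_assoc T F D).symm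
  have hfpow : ∀ (m : ℕ) (X : Matrix (Fin n) (Fin s) ℂ), (f ^ m) X = T ^ m * X := by
    intro m
    induction m with
    | zero => intro X; simp
    | succ m ih =>
      intro X
      rw [pow_succ', Module.End.mul_apply, ih]
      show T * (T ^ m * X) = T ^ (m + 1) * X
      rw [pow_succ']
      exact (Matrix.mul_assoc T (T ^ m) X).symm
  have hgpow : ∀ (m : ℕ) (X : Matrix (Fin n) (Fin s) ℂ), (g ^ m) X = X * D ^ m := by
    intro m
    induction m with
    | zero => intro X; simp
    | succ m ih =>
      intro X
      rw [pow_succ, Module.End.mul_apply]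
      show (g ^ m) (X * D) = X * D ^ (m + 1)
      rw [ih, Matrix.mul_assoc, ← pow_succ']
  have hinv : ∀ m : ℕ, P * (((f + g) ^ m) Rh) = ((f + g) ^ m) Rh := by
    intro m
    induction m with
    | zero => simpa using hPRh
    | succ m ih =>
      rw [pow_succ', Module.End.mul_apply, LinearMap.add_apply]
      show P * (T * ((f + g) ^ m) Rh + (((f + g) ^ m) Rh) * D)
          = T * ((f + g) ^ m) Rh + (((f + g) ^ m) Rh) * D
      rw [Matrix.mul_add, ← Matrix.mul_assoc P T, hPT, ← Matrix.mul_assoc P, ih]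
  have step1 : ∀ m : ℕ,
      (fun F : Matrix (Fin n) (Fin s) ℂ => P * (A * F + F * D))^[m] Rh
        = ((f + g) ^ m) Rh := by
    intro m
    induction m with
    | zero => simp
    | succ m ih =>
      rw [Function.iterate_succ_apply', ih, pow_succ', Module.End.mul_apply,
        LinearMap.add_apply]
      show P * (A * ((f + g) ^ m) Rh + (((f + g) ^ m) Rh) * D)
          = T * ((f + g) ^ m) Rh + (((f + g) ^ m) Rh) * D
      rw [Matrix.mul_add, ← Matrix.mul_assoc P A, ← hTdef, ← Matrix.mul_assoc P, hinv]
  rw [step1, hfg.add_pow, LinearMap.sum_apply]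
  refine Finset.sum_congr rfl fun m hm => ?_
  rw [Module.End.mul_apply, Module.End.mul_apply, Module.End.natCast_apply,
    map_nsmul, map_nsmul, hgpow, hfpow, ← Matrix.mul_assoc]


/-- Let `D = diag(σ₁,…,σ_s)`, `C*C = I_k`, `P = I − CC*`, and let
`R̂` satisfy `C* R̂ = 0`.  For the projected Sylvester operator `S(F) = P(AF + FD)` and
every `j ≥ 1`, the block Krylov subspace generated by `S` from `R̂` equals the block Krylov
subspace generated by the matrix `PA` from `R̂`. -/
theorem projected_sylvester_block_krylov_invariance {n s k : ℕ}
    (A : Matrix (Fin n) (Fin n) ℂ) (σv : Fin s → ℂ)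
    (C : Matrix (Fin n) (Fin k) ℂ) (hC : Cᴴ * C = 1)
    (Rh : Matrix (Fin n) (Fin s) ℂ) (hR : Cᴴ * Rh = 0)
    (j : ℕ) (hj : 1 ≤ j) :
    Submodule.span ℂ
      {x : Fin n → ℂ | ∃ i < j, ∃ c : Fin s,
        x = fun p => ((fun F : Matrix (Fin n) (Fin s) ℂ =>
          ((1 : Matrix (Fin n) (Fin n) ℂ) - C * Cᴴ) *
            (A * F + F * Matrix.diagonal σv))^[i] Rh) p c} =
    Submodule.span ℂ
      {x : Fin n → ℂ | ∃ i < j, ∃ c : Fin s,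
        x = fun p => (((((1 : Matrix (Fin n) (Fin n) ℂ) - C * Cᴴ) * A) ^ i) * Rh) p c} := by
  have colS : ∀ (i : ℕ) (c : Fin s),
      (fun p => ((fun F : Matrix (Fin n) (Fin s) ℂ =>
          ((1 : Matrix (Fin n) (Fin n) ℂ) - C * Cᴴ) *
            (A * F + F * Matrix.diagonal σv))^[i] Rh) p c)
      = ∑ m ∈ Finset.range (i+1),
          (((i.choose m : ℂ)) * (σv c)^(i-m)) •
            (fun p => (((((1 : Matrix (Fin n) (Fin n) ℂ) - C * Cᴴ) * A) ^ m) * Rh) p c) := by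
    intro i c
    funext p
    rw [sylv_iter_eq A σv C hC Rh hR i]
    simp only [Matrix.sum_apply, Matrix.smul_apply, Matrix.diagonal_pow,
      Matrix.mul_diagonal, Finset.sum_apply, Pi.smul_apply, Pi.pow_apply,
      smul_eq_mul, nsmul_eq_mul]
    refine Finset.sum_congr rfl fun m _ => by ring
  refine le_antisymm (Submodule.span_le.mpr ?_) (Submodule.span_le.mpr ?_)
  · rintro x ⟨i, hij, c, rfl⟩
    show _ ∈ Submodule.span ℂ _
    rw [colS i c]
    refine Submodule.sum_mem _ fun m hm => Submodule.smul_mem _ _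
      (Submodule.subset_span ⟨m, ?_, c, rfl⟩)
    have := Finset.mem_range.mp hm
    omega
  · rintro x ⟨i, hij, c, rfl⟩
    show _ ∈ Submodule.span ℂ _
    clear hj
    induction i using Nat.strong_induction_on with
    | _ i IH =>
      have h := colS i c
      rw [Finset.sum_range_succ, Nat.choose_self, Nat.sub_self, pow_zero,
        mul_one, Nat.cast_one, one_smul] at h
      have h2 := eq_sub_of_add_eq' h.symm
      rw [h2]
      refine Submodule.sub_mem _ (Submodule.subset_span ⟨i, hij, c, rfl⟩) ?_
      exact Submodule.sum_mem _ fun m hm => Submodule.smul_mem _ _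
        (IH m (Finset.mem_range.mp hm) (lt_trans (Finset.mem_range.mp hm) hij))
end
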